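/- A linear map D on the evolution algebra E_n (n ≥ 2, field of characteristic ≠ 2) is a derivation if and only if its matrix in the basis {e_1,...,e_n} has the block form [[0, 0], [0, D_0]] where D_0 is an antisymmetric (n−1)×(n−1) matrix (D_0 = −D_0ᵀ). Consequently, dim Der(E_n) = (n−1)(n−2)/2. -/

import Mathlib

open Module

/-- The evolution algebra `E_n` on `Fin (n+2) → F` (`n + 2 ≥ 2`):
`eᵢ² = e₀`, `eᵢeⱼ = 0` for `i ≠ j`. -/
def enMul {F : Type*} [Field F] {n : ℕ} (x y : Fin (n + 2) → F) : Fin (n + 2) → F :=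
  fun k => if k = 0 then ∑ i, x i * y i else 0

lemma enMul_add_left {F : Type*} [Field F] {n : ℕ} (x x' y : Fin (n + 2) → F) :
    enMul (x + x') y = enMul x y + enMul x' y := by
  funext k
  simp only [enMul, Pi.add_apply]
  split
  · rw [← Finset.sum_add_distrib]
    exact Finset.sum_congr rfl fun i _ => by ring
  · simp

lemma enMul_add_right {F : Type*} [Field F] {n : ℕ} (x y y' : Fin (n + 2) → F) :
    enMul x (y + y') = enMul x y + enMul x y' := by
  funext k
  simp only [enMul, Pi.add_apply]
  split
  · rw [← Finset.sum_add_distrib]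
    exact Finset.sum_congr rfl fun i _ => by ring
  · simp

lemma enMul_smul_left {F : Type*} [Field F] {n : ℕ} (c : F) (x y : Fin (n + 2) → F) :
    enMul (c • x) y = c • enMul x y := by
  funext k
  simp only [enMul, Pi.smul_apply, smul_eq_mul]
  split
  · rw [Finset.mul_sum]
    exact Finset.sum_congr rfl fun i _ => by ring
  · simp

lemma enMul_smul_right {F : Type*} [Field F] {n : ℕ} (c : F) (x y : Fin (n + 2) → F) :
    enMul x (c • y) = c • enMul x y := by
  funext k
  simp only [enMul, Pi.smul_apply, smul_eq_mul]
  split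
  · rw [Finset.mul_sum]
    exact Finset.sum_congr rfl fun i _ => by ring
  · simp

/-- The space of derivations of `E_n`. -/
def enDer (F : Type*) [Field F] (n : ℕ) :
    Submodule F ((Fin (n + 2) → F) →ₗ[F] (Fin (n + 2) → F)) where
  carrier := {D | ∀ x y, D (enMul x y) = enMul (D x) y + enMul x (D y)}
  add_mem' := by
    intro a b ha hb x y
    simp only [LinearMap.add_apply, ha x y, hb x y, enMul_add_left, enMul_add_right]
    abel
  zero_mem' := by
    intro x y
    have h1 : ∀ z : Fin (n + 2) → F, enMul (F := F) (n := n) 0 z = 0 := by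
      intro z; funext k; simp [enMul]
    have h2 : ∀ z : Fin (n + 2) → F, enMul (F := F) (n := n) z 0 = 0 := by
      intro z; funext k; simp [enMul]
    simp [h1, h2]
  smul_mem' := by
    intro c D hD x y
    simp only [LinearMap.smul_apply, hD x y, enMul_smul_left, enMul_smul_right, smul_add]

/-! Since `x y = (x ⬝ᵥ y) e₀`, a linear map `D` is a derivation of `E_n` iff
`(x ⬝ᵥ y) D e₀ = (D x ⬝ᵥ y + x ⬝ᵥ D y) e₀` for all `x, y`. Taking `x = y = e₀` forces `D e₀ = 0`,
and then the condition says that the matrix of `D` is skew-symmetric. Deleting the first row and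
column therefore identifies `Der(E_n)` with `so(n - 1)`, and in characteristic `≠ 2` a
skew-symmetric matrix is freely determined by its entries above the diagonal. -/

open Matrix LieAlgebra.Orthogonal

section SkewSymmetric

variable {ι F : Type*} [Fintype ι] [DecidableEq ι] [CommRing F]

lemma sub_transpose_mem_so (A : Matrix ι ι F) : A - Aᵀ ∈ so ι F := by
  rw [mem_so, transpose_sub, transpose_transpose, neg_sub]

lemma submatrix_mem_so {κ : Type*} [Fintype κ] [DecidableEq κ] {A : Matrix ι ι F}
    (hA : A ∈ so ι F) (e : κ → ι) : A.submatrix e e ∈ so κ F := by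
  rw [mem_so] at hA ⊢
  rw [transpose_submatrix, hA]
  rfl

def extendByZero {m : ℕ} (A : Matrix (Fin m) (Fin m) F) : Matrix (Fin (m + 1)) (Fin (m + 1)) F :=
  of (vecCons 0 fun j => vecCons 0 (A j))

lemma extendByZero_mem_so {m : ℕ} {A : Matrix (Fin m) (Fin m) F} (hA : A ∈ so _ F) :
    extendByZero A ∈ so _ F := by
  rw [mem_so] at hA ⊢
  ext j k
  induction j using Fin.cases <;> induction k using Fin.cases
  case succ.succ j k => simpa [extendByZero] using congr_fun₂ hA j k
  all_goals simp [extendByZero]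

lemma diag_eq_zero_of_mem_so [IsDomain F] (hF : ringChar F ≠ 2) {A : Matrix ι ι F}
    (hA : A ∈ so ι F) (i : ι) : A i i = 0 :=
  (Ring.eq_self_iff_eq_zero_of_char_ne_two hF).mp (congr_fun₂ ((mem_so _ _ A).mp hA) i i).symm

variable [LinearOrder ι]

def strictUpperOf (f : {p : ι × ι // p.1 < p.2} → F) : Matrix ι ι F :=
  of fun i j => if h : i < j then f ⟨(i, j), h⟩ else 0

def soEquivStrictUpper [IsDomain F] (hF : ringChar F ≠ 2) :
    so ι F ≃ₗ[F] ({p : ι × ι // p.1 < p.2} → F) where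
  toFun A p := (A : Matrix ι ι F) p.1.1 p.1.2
  map_add' _ _ := rfl
  map_smul' _ _ := rfl
  invFun f := ⟨strictUpperOf f - (strictUpperOf f)ᵀ, sub_transpose_mem_so _⟩
  left_inv A := by
    ext i j
    have hskew := congr_fun₂ ((mem_so _ _ _).mp A.2) j i
    rcases lt_trichotomy i j with h | rfl | h
    · simp [strictUpperOf, h, h.not_gt]
    · simp [strictUpperOf, diag_eq_zero_of_mem_so hF A.2]
    · simpa [strictUpperOf, h, h.not_gt] using hskew.symm
  right_inv f := by
    ext ⟨⟨i, j⟩, h⟩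
    simp [strictUpperOf, h, h.not_gt]

lemma finrank_so [IsDomain F] (hF : ringChar F ≠ 2) :
    finrank F (so ι F) = (Fintype.card ι).choose 2 := by
  rw [(soEquivStrictUpper hF).finrank_eq, finrank_fintype_fun_eq_card, Fintype.card_subtype,
    Fintype.card_product_filter_lt]

end SkewSymmetric

section EvolutionAlgebra

variable {F : Type*} [Field F] {n : ℕ}

lemma enMul_eq_dotProduct_smul (x y : Fin (n + 2) → F) :
    enMul x y = (x ⬝ᵥ y) • Pi.single 0 1 := by
  ext k
  rcases eq_or_ne k 0 with rfl | hk
  · simp [enMul, dotProduct]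
  · simp [enMul, hk]

lemma enMul_single_left (k : Fin (n + 2)) (y : Fin (n + 2) → F) :
    enMul (Pi.single k 1) y = y k • Pi.single 0 1 := by
  rw [enMul_eq_dotProduct_smul, single_one_dotProduct]

lemma enMul_single_right (x : Fin (n + 2) → F) (k : Fin (n + 2)) :
    enMul x (Pi.single k 1) = x k • Pi.single 0 1 := by
  rw [enMul_eq_dotProduct_smul, dotProduct_single_one]

def enMulₗ : (Fin (n + 2) → F) →ₗ[F] (Fin (n + 2) → F) →ₗ[F] (Fin (n + 2) → F) :=
  LinearMap.mk₂ F enMul enMul_add_left enMul_smul_left enMul_add_right enMul_smul_right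

lemma mem_enDer_iff_single (D : (Fin (n + 2) → F) →ₗ[F] (Fin (n + 2) → F)) :
    D ∈ enDer F n ↔ ∀ j k : Fin (n + 2), D (enMul (Pi.single j 1) (Pi.single k 1)) =
      enMul (D (Pi.single j 1)) (Pi.single k 1) + enMul (Pi.single j 1) (D (Pi.single k 1)) := by
  refine ⟨fun hD j k => hD _ _, fun h x y => ?_⟩
  have hbilin : enMulₗ.compr₂ D =
      enMulₗ.compl₁₂ D LinearMap.id + enMulₗ.compl₁₂ LinearMap.id D :=
    LinearMap.ext_basis (Pi.basisFun F _) (Pi.basisFun F _) fun j k => by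
      simpa [enMulₗ] using h j k
  simpa [enMulₗ] using LinearMap.congr_fun₂ hbilin x y

lemma mem_enDer_iff (D : (Fin (n + 2) → F) →ₗ[F] (Fin (n + 2) → F)) :
    D ∈ enDer F n ↔ D (Pi.single 0 1) = 0 ∧
      ∀ j k : Fin (n + 2), D (Pi.single k 1) j = -D (Pi.single j 1) k := by
  simp only [mem_enDer_iff_single, enMul_single_left, enMul_single_right, ← add_smul, map_smul]
  constructor
  · intro h
    have hD0 : D (Pi.single 0 1) = 0 := by
      have h00 := h 0 0
      simp only [Pi.single_eq_same, one_smul] at h00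
      have hc : D (Pi.single 0 1) 0 = 0 := by simpa using congr_fun h00 0
      rwa [hc, add_zero, zero_smul] at h00
    refine ⟨hD0, fun j k => eq_neg_of_add_eq_zero_left ?_⟩
    simpa [hD0] using (congr_fun (h k j) 0).symm
  · rintro ⟨hD0, hskew⟩ j k
    rw [hD0, smul_zero, hskew k j, neg_add_cancel, zero_smul]

lemma mem_enDer_iff_toMatrix' (D : (Fin (n + 2) → F) →ₗ[F] (Fin (n + 2) → F)) :
    D ∈ enDer F n ↔ (∀ j, LinearMap.toMatrix' D j 0 = 0) ∧ LinearMap.toMatrix' D ∈ so _ F := by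
  rw [mem_enDer_iff, mem_so, ← Matrix.ext_iff, funext_iff]
  simp only [LinearMap.toMatrix'_apply, transpose_apply, Pi.zero_apply]
  exact and_congr Iff.rfl forall_comm

def enDerEquivSo : enDer F n ≃ₗ[F] so (Fin (n + 1)) F where
  toFun D := ⟨(LinearMap.toMatrix' (D : (Fin (n + 2) → F) →ₗ[F] _)).submatrix Fin.succ Fin.succ,
    submatrix_mem_so ((mem_enDer_iff_toMatrix' _).mp D.2).2 _⟩
  map_add' _ _ := by ext; simp
  map_smul' _ _ := by ext; simp
  invFun A := ⟨toLin' (extendByZero A), by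
    rw [mem_enDer_iff_toMatrix', LinearMap.toMatrix'_toLin']
    exact ⟨fun j => by induction j using Fin.cases <;> simp [extendByZero],
      extendByZero_mem_so A.2⟩⟩
  left_inv D := by
    obtain ⟨hcol, hskew⟩ := (mem_enDer_iff_toMatrix' _).mp D.2
    rw [mem_so] at hskew
    refine Subtype.ext (LinearMap.toMatrix'.injective ?_)
    rw [LinearMap.toMatrix'_toLin']
    ext j k
    induction j using Fin.cases <;> induction k using Fin.cases
    · simp [extendByZero, hcol]
    · symm
      simpa [extendByZero, hcol] using congr_fun₂ hskew 0 _
    · simp [extendByZero, hcol]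
    · simp [extendByZero]
  right_inv A := by
    ext j k
    simp [extendByZero]

end EvolutionAlgebra

/-- **Derivations of `E_n`.** Over a field of characteristic `≠ 2`, a linear map `D`
is a derivation of `E_n` iff its matrix `(d j k) = D(eₖ) j` has zero first row and
first column and is antisymmetric on the remaining block; consequently
`dim Der(E_n) = (n-1)(n-2)/2` (here the dimension is `n + 2`). -/
theorem stmt_9 (F : Type*) [Field F] (hchar : ringChar F ≠ 2) (n : ℕ)
    (D : (Fin (n + 2) → F) →ₗ[F] (Fin (n + 2) → F)) :
    ((∀ x y, D (enMul x y) = enMul (D x) y + enMul x (D y)) ↔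
      ((∀ k : Fin (n + 2), D (Pi.single k 1) 0 = 0) ∧
       (∀ j : Fin (n + 2), D (Pi.single 0 1) j = 0) ∧
       (∀ j k : Fin (n + 2), j ≠ 0 → k ≠ 0 →
          D (Pi.single k 1) j = - D (Pi.single j 1) k))) ∧
    finrank F (enDer F n) = ((n + 2) - 1) * ((n + 2) - 2) / 2 := by
  refine ⟨(mem_enDer_iff D).trans ⟨?_, ?_⟩, ?_⟩
  · rintro ⟨hcol, hskew⟩
    refine ⟨fun k => ?_, fun j => by rw [hcol, Pi.zero_apply], fun j k _ _ => hskew j k⟩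
    rw [hskew, hcol, Pi.zero_apply, neg_zero]
  · rintro ⟨hrow, hcol, hskew⟩
    refine ⟨funext hcol, fun j k => ?_⟩
    rcases eq_or_ne j 0 with rfl | hj
    · rw [hrow, hcol, neg_zero]
    rcases eq_or_ne k 0 with rfl | hk
    · rw [hrow, hcol, neg_zero]
    exact hskew j k hj hk
  · rw [enDerEquivSo.finrank_eq, finrank_so hchar, Fintype.card_fin, Nat.choose_two_right]
    rfl
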